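/- arXiv:1109.0579 — 2 statements merged into one kernel-verified Lean document; each statement's English description precedes it below -/
import Mathlib

section
/- Let Λ be a full-rank lattice in ℂⁿ and let H be a positive semidefinite Hermitian n×n complex matrix with kernel Σ = {v ∈ ℂⁿ : Hv = 0}, a complex subspace of complex dimension n−m with m < n. Assume Σ is ℚ-defined modulo Λ, i.e. Σ is spanned over ℝ by Σ ∩ span_ℚ(Λ) (equivalently, Λ ∩ Σ is a full-rank lattice in Σ). Then there exist a surjective ℂ-linear map f : ℂⁿ → ℂᵐ with kernel exactly Σ, such that Λ' := f(Λ) is a full-rank lattice in ℂᵐ, and a positive definite Hermitian m×m matrix H' such that x*Hx = (f x)*H'(f x) for all x ∈ ℂⁿ, i.e. H is the pullback of H' under f. -/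
/-!
Take for `f` the quotient map by `V`, and `H' = Gᴴ H G` for a linear right inverse `G` of `f`:
since `x - G (f x) ∈ ker H`, the Hermitian forms of `H` and `H'` correspond under `f`.

For the lattice, rationality of `V` means that `Λ ∩ V` spans `V`; being discrete, it is a lattice
in `V` and has `ℤ`-rank `dim_ℝ V`. Rank–nullity over `ℤ` for `f` restricted to `Λ` then gives
`f(Λ)` the `ℤ`-rank `dim_ℝ ℂᵐ`. A finitely generated subgroup spanning a real vector space with
rank equal to the dimension is generated by a real basis, hence discrete.
-/

open Matrix Module Submodule
open scoped ComplexOrder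

theorem exists_int_smul_mem_span_int_of_mem_span_rat {E : Type*} [AddCommGroup E] [Module ℚ E]
    {S : Set E} {x : E} (hx : x ∈ span ℚ S) : ∃ d : ℤ, d ≠ 0 ∧ d • x ∈ span ℤ S := by
  induction hx using span_induction with
  | mem x h => exact ⟨1, one_ne_zero, by simpa using subset_span h⟩
  | zero => exact ⟨1, one_ne_zero, by simp⟩
  | add x y _ _ ihx ihy =>
    obtain ⟨a, ha, hax⟩ := ihx
    obtain ⟨b, hb, hby⟩ := ihy
    refine ⟨a * b, mul_ne_zero ha hb, ?_⟩
    rw [smul_add, mul_comm a b, mul_smul, mul_comm b a, mul_smul]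
    exact add_mem (zsmul_mem hax b) (zsmul_mem hby a)
  | smul q x _ ih =>
    obtain ⟨a, ha, hax⟩ := ih
    refine ⟨q.den * a, mul_ne_zero (by exact_mod_cast q.den_nz) ha, ?_⟩
    have : (q.den * a : ℤ) • (q • x) = q.num • (a • x) := by
      simp only [← Int.cast_smul_eq_zsmul ℚ, smul_smul]
      congr 1
      push_cast
      rw [mul_right_comm, mul_comm (q.den : ℚ), Rat.mul_den_eq_num]
    rw [this]
    exact zsmul_mem hax _

theorem span_inter_eq_of_span_inter_span_rat_eq {E : Type*} [AddCommGroup E] [Module ℚ E]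
    [Module ℝ E] {K : Submodule ℝ E} {L : Submodule ℤ E}
    (h : span ℝ ((K : Set E) ∩ span ℚ (L : Set E)) = K) : span ℝ ((K : Set E) ∩ L) = K := by
  refine le_antisymm (span_le.mpr Set.inter_subset_left) (h.ge.trans (span_le.mpr ?_))
  rintro x ⟨hxK, hxL⟩
  obtain ⟨d, hd, hdx⟩ := exists_int_smul_mem_span_int_of_mem_span_rat hxL
  rw [span_eq] at hdx
  have hdx' : (d : ℝ) • x ∈ span ℝ ((K : Set E) ∩ L) := by
    rw [Int.cast_smul_eq_zsmul]
    exact subset_span ⟨K.toAddSubgroup.zsmul_mem hxK d, hdx⟩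
  simpa [hd] using smul_mem _ (d : ℝ)⁻¹ hdx'

universe v

theorem Submodule.finrank_map_add_finrank_inf_ker {R : Type*} {M : Type v} {N : Type*} [Ring R]
    [HasRankNullity.{v} R] [StrongRankCondition R] [AddCommGroup M] [Module R M]
    [AddCommGroup N] [Module R N] (p : Submodule R M) [Module.Finite R p] (φ : M →ₗ[R] N) :
    finrank R (p.map φ) + finrank R ↥(p ⊓ LinearMap.ker φ) = finrank R p := by
  let g := φ ∘ₗ p.subtype
  have hrange : LinearMap.range g = p.map φ := by
    rw [LinearMap.range_comp, range_subtype]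
  have hker : LinearMap.ker g = comap p.subtype (p ⊓ LinearMap.ker φ) := by
    rw [LinearMap.ker_comp, comap_inf, comap_subtype_self, top_inf_eq]
  rw [← hrange, ← (LinearMap.quotKerEquivRange g).finrank_eq,
    ← (comapSubtypeEquivOfLe inf_le_left).finrank_eq, ← hker, finrank_quotient_add_finrank]

theorem Submodule.exists_surjective_ker_eq {K E : Type*} [Field K] [AddCommGroup E] [Module K E]
    [FiniteDimensional K E] (V : Submodule K E) {m : ℕ} (hm : finrank K V + m = finrank K E) :
    ∃ f : E →ₗ[K] (Fin m → K), Function.Surjective f ∧ LinearMap.ker f = V := by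
  have hquot : finrank K (E ⧸ V) = finrank K (Fin m → K) := by
    have := V.finrank_quotient_add_finrank
    rw [finrank_fin_fun]
    omega
  let e := LinearEquiv.ofFinrankEq _ _ hquot
  refine ⟨e.toLinearMap ∘ₗ V.mkQ, e.surjective.comp V.mkQ_surjective, ?_⟩
  rw [LinearMap.ker_comp, LinearEquiv.ker, comap_bot, ker_mkQ]

theorem span_map_restrictScalars_eq_top {K E F : Type*} [Ring K] [AddCommGroup E] [Module K E]
    [AddCommGroup F] [Module K F] (L : Submodule ℤ E) (hL : span K (L : Set E) = ⊤)
    (f : E →ₗ[K] F) (hf : Function.Surjective f) :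
    span K (L.map (f.restrictScalars ℤ) : Set F) = ⊤ := by
  rw [map_coe, LinearMap.coe_restrictScalars, span_image, hL, Submodule.map_top,
    LinearMap.range_eq_top.mpr hf]

section

variable {E F : Type*} [NormedAddCommGroup E] [NormedSpace ℝ E] [NormedAddCommGroup F]
  [NormedSpace ℝ F]

theorem finrank_span_real_eq_finrank_int [FiniteDimensional ℝ E] (N : Submodule ℤ E)
    [DiscreteTopology N] :
    finrank ℝ (span ℝ (N : Set E)) = finrank ℤ N := by
  have h := Real.finrank_eq_int_finrank_of_discrete (s := (N : Set E)) (by rwa [span_eq])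
  rwa [Set.finrank, Set.finrank, span_eq] at h

theorem discreteTopology_of_span_eq_top_of_finrank_le (N : Submodule ℤ F) [Module.Finite ℤ N]
    (hspan : span ℝ (N : Set F) = ⊤) (hrank : finrank ℤ N ≤ finrank ℝ F) :
    DiscreteTopology N := by
  let : Module ℚ F := Module.compHom F (algebraMap ℚ ℝ)
  have : IsAddTorsionFree F := .of_module_rat _
  let b := Module.Free.chooseBasis ℤ N
  have hspan_b : span ℤ (Set.range ((↑) ∘ b : _ → F)) = N := by
    have := congrArg (map N.subtype) b.span_eq
    rwa [map_span, Submodule.map_top, range_subtype, ← Set.range_comp] at this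
  have htop : ⊤ ≤ span ℝ (Set.range ((↑) ∘ b : _ → F)) := by
    rw [← span_span_of_tower ℤ, hspan_b, hspan]
  have hcard : Fintype.card (Module.Free.ChooseBasisIndex ℤ N) = finrank ℝ F := by
    refine le_antisymm (finrank_eq_card_chooseBasisIndex ℤ N ▸ hrank) ?_
    rw [← finrank_top ℝ F, ← top_le_iff.mp htop]
    exact finrank_range_le_card _
  have hspan_d : span ℤ (Set.range (basisOfTopLeSpanOfCardEqFinrank _ htop hcard)) = N := by
    rw [coe_basisOfTopLeSpanOfCardEqFinrank, hspan_b]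
  exact hspan_d ▸ inferInstance

theorem ZLattice.discreteTopology_map_of_span_inter_ker [FiniteDimensional ℝ E] (L : Submodule ℤ E)
    [DiscreteTopology L] [IsZLattice ℝ L] (f : E →ₗ[ℝ] F) (hf : Function.Surjective f)
    (hK : span ℝ ((LinearMap.ker f : Set E) ∩ L) = LinearMap.ker f) :
    DiscreteTopology (L.map (f.restrictScalars ℤ)) := by
  have : DiscreteTopology ↥(L ⊓ LinearMap.ker (f.restrictScalars ℤ)) :=
    DiscreteTopology.of_subset (inferInstanceAs (DiscreteTopology L)) inf_le_left
  have hrank_ker : finrank ℤ ↥(L ⊓ LinearMap.ker (f.restrictScalars ℤ)) =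
      finrank ℝ (LinearMap.ker f) := by
    rw [← finrank_span_real_eq_finrank_int, coe_inf, Set.inter_comm, LinearMap.ker_restrictScalars]
    exact congrArg (fun K : Submodule ℝ E ↦ finrank ℝ K) hK
  have hrank_nullity := L.finrank_map_add_finrank_inf_ker (f.restrictScalars ℤ)
  rw [hrank_ker, ZLattice.rank ℝ L, ← f.finrank_range_add_finrank_ker,
    LinearMap.range_eq_top.mpr hf, finrank_top] at hrank_nullity
  exact discreteTopology_of_span_eq_top_of_finrank_le _
    (span_map_restrictScalars_eq_top L IsZLattice.span_top f hf) (by omega)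

end

namespace Matrix

variable {ι κ 𝕜 : Type*} [Fintype ι] [Fintype κ] [RCLike 𝕜]

theorem IsHermitian.dotProduct_mulVec_add_of_mulVec_eq_zero {H : Matrix ι ι 𝕜}
    (hH : H.IsHermitian) (u : ι → 𝕜) {w : ι → 𝕜} (hw : H *ᵥ w = 0) :
    star (u + w) ⬝ᵥ H *ᵥ (u + w) = star u ⬝ᵥ H *ᵥ u := by
  have hcross : star w ⬝ᵥ H *ᵥ u = 0 := by
    rw [dotProduct_mulVec, ← hH.eq, ← star_mulVec, hw, star_zero, zero_dotProduct]
  simp [mulVec_add, hw, hcross]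

theorem dotProduct_conjTranspose_mul_mul_mulVec (H : Matrix ι ι 𝕜) (G : Matrix ι κ 𝕜)
    (y : κ → 𝕜) :
    star y ⬝ᵥ (Gᴴ * H * G) *ᵥ y = star (G *ᵥ y) ⬝ᵥ H *ᵥ (G *ᵥ y) := by
  rw [Matrix.mul_assoc, ← mulVec_mulVec, dotProduct_mulVec, ← star_mulVec, ← mulVec_mulVec]

theorem PosSemidef.exists_posDef_pullback [DecidableEq κ] {H : Matrix ι ι 𝕜} (hH : H.PosSemidef)
    (f : (ι → 𝕜) →ₗ[𝕜] (κ → 𝕜)) (hf : Function.Surjective f)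
    (hker : LinearMap.ker f = LinearMap.ker H.mulVecLin) :
    ∃ H' : Matrix κ κ 𝕜, H'.PosDef ∧
      ∀ x : ι → 𝕜, star x ⬝ᵥ H *ᵥ x = star (f x) ⬝ᵥ H' *ᵥ f x := by
  obtain ⟨g, hg⟩ := f.exists_rightInverse_of_surjective (LinearMap.range_eq_top.mpr hf)
  have hfg (y : κ → 𝕜) : f (g y) = y := LinearMap.congr_fun hg y
  have hG (y : κ → 𝕜) : LinearMap.toMatrix' g *ᵥ y = g y := by
    rw [← toLin'_apply, toLin'_toMatrix']
  have hmem_ker {x : ι → 𝕜} : H *ᵥ x = 0 ↔ f x = 0 := by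
    rw [← LinearMap.mem_ker, hker, LinearMap.mem_ker, mulVecLin_apply]
  have hpsd := hH.conjTranspose_mul_mul_same (LinearMap.toMatrix' g)
  refine ⟨_, PosDef.of_dotProduct_mulVec_pos hpsd.isHermitian fun y hy ↦ ?_, fun x ↦ ?_⟩
  · refine (hpsd.dotProduct_mulVec_nonneg y).lt_of_ne' fun h0 ↦ hy ?_
    rwa [dotProduct_conjTranspose_mul_mul_mulVec, hH.dotProduct_mulVec_zero_iff, hG, hmem_ker,
      hfg] at h0
  · have hw : H *ᵥ (x - g (f x)) = 0 := by
      rw [hmem_ker, map_sub, hfg, sub_self]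
    rw [dotProduct_conjTranspose_mul_mul_mulVec, hG,
      ← hH.isHermitian.dotProduct_mulVec_add_of_mulVec_eq_zero (g (f x)) hw, add_sub_cancel]

end Matrix

/-- Let `Λ` be a full-rank lattice in `ℂⁿ` and `H` a positive semidefinite Hermitian matrix
whose kernel `V = {v : Hv = 0}` has complex dimension `n - m` with `m < n`, and assume `V` is
`ℚ`-defined modulo `Λ`, i.e. `V` is spanned over `ℝ` by `V ∩ span_ℚ(Λ)`. Then there exist a
surjective `ℂ`-linear map `f : ℂⁿ → ℂᵐ` with kernel exactly `V` such that `f(Λ)` is a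
full-rank lattice in `ℂᵐ`, and a positive definite Hermitian `m×m` matrix `H'` with
`x*Hx = (f x)*H'(f x)` for all `x`, i.e. `H` is the pullback of `H'` under `f`. -/
theorem semidefinite_with_rational_kernel_is_pullback
    (n m : ℕ) (hm : m < n)
    (Λ : AddSubgroup (Fin n → ℂ)) [DiscreteTopology Λ]
    (hspan : Submodule.span ℝ (Λ : Set (Fin n → ℂ)) = ⊤)
    (H : Matrix (Fin n) (Fin n) ℂ) (hH : H.PosSemidef)
    (V : Submodule ℂ (Fin n → ℂ)) (hV : V = LinearMap.ker H.mulVecLin)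
    (hdim : Module.finrank ℂ V = n - m)
    (hQ : Submodule.span ℝ ((V : Set (Fin n → ℂ)) ∩
        (Submodule.span ℚ (Λ : Set (Fin n → ℂ)) : Set (Fin n → ℂ)))
      = V.restrictScalars ℝ) :
    ∃ f : (Fin n → ℂ) →ₗ[ℂ] (Fin m → ℂ),
      Function.Surjective f ∧ LinearMap.ker f = V ∧
      DiscreteTopology ↥(Λ.map f.toAddMonoidHom) ∧
      Submodule.span ℝ ((Λ.map f.toAddMonoidHom : AddSubgroup (Fin m → ℂ)) : Set (Fin m → ℂ)) = ⊤ ∧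
      ∃ H' : Matrix (Fin m) (Fin m) ℂ, H'.PosDef ∧
        ∀ x : Fin n → ℂ, star x ⬝ᵥ H *ᵥ x = star (f x) ⬝ᵥ H' *ᵥ (f x) := by
  obtain ⟨f, hf, hker⟩ := V.exists_surjective_ker_eq (m := m) (by
    rw [hdim, finrank_fin_fun]
    omega)
  let L := Λ.toIntSubmodule
  have : DiscreteTopology L := ‹DiscreteTopology Λ›
  have : IsZLattice ℝ L := ⟨hspan⟩
  have hK : span ℝ ((LinearMap.ker (f.restrictScalars ℝ) : Set (Fin n → ℂ)) ∩ L) =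
      LinearMap.ker (f.restrictScalars ℝ) := by
    rw [LinearMap.ker_restrictScalars, hker]
    exact span_inter_eq_of_span_inter_span_rat_eq hQ
  exact ⟨f, hf, hker,
    ZLattice.discreteTopology_map_of_span_inter_ker L (f.restrictScalars ℝ) hf hK,
    span_map_restrictScalars_eq_top L hspan (f.restrictScalars ℝ) hf,
    hH.exists_posDef_pullback f hf (hker.trans hV)⟩
end

section
/- Let Λ be a full-rank lattice in ℂⁿ, let f : ℂⁿ → ℂᵐ be a surjective ℂ-linear map such that Λ' := f(Λ) is a full-rank lattice in ℂᵐ, and let H' be a positive definite Hermitian m×m matrix; set H := the pullback of H' by f, i.e. x*Hx = (f x)*H'(f x). Let I denote the n×n identity matrix. Then: (1) for all x, y ∈ ℂⁿ, the flat pseudodistance satisfies d_H(x̄, ȳ) = d_{H'}(f(x), f(y)), where d_{H'} is the flat distance on ℂᵐ⧸Λ'; and (2) as t → 0⁺ the flat distances of the positive definite matrices H + tI converge uniformly to d_H: for every ε > 0 there is t₀ > 0 such that for all 0 < t < t₀ and all x, y ∈ ℂⁿ one has |d_{H+tI}(x̄, ȳ) − d_H(x̄, ȳ)| < ε. -/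
open Matrix
open scoped ComplexOrder

/-- The flat pseudodistance on the torus `ℂᵏ⧸Λ` induced by a (semi)definite Hermitian matrix
`H`: `d_H(x̄, ȳ) = inf_{λ ∈ Λ} √((x−y−λ)*H(x−y−λ))`, expressed on representatives. -/
noncomputable def flatDist {k : ℕ} (Λ : AddSubgroup (Fin k → ℂ))
    (H : Matrix (Fin k) (Fin k) ℂ) (x y : Fin k → ℂ) : ℝ :=
  ⨅ l : Λ, Real.sqrt ((star (x - y - (l : Fin k → ℂ)) ⬝ᵥ H *ᵥ (x - y - (l : Fin k → ℂ))).re)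

/-! The pullback identity holds term by term in the infimum defining `d_H`, once the infimum over
`Λ` is reindexed by its image `A(Λ)`. For the collapse, `t ↦ d_{H+tI}` decreases pointwise to
`d_H` as `t ↓ 0`. Each of these functions is continuous (writing the positive semidefinite matrix
as `B*B` turns it into a Euclidean distance to the set `B(Λ)`) and `Λ`-periodic. Since `Λ` spans,
every point is congruent to one in a fixed compact set, where Dini's theorem makes the convergence
uniform. -/

open Filter Topology

lemma Matrix.star_dotProduct_conjTranspose_mul_mul_mulVec {R ι κ : Type*} [CommSemiring R]
    [StarRing R] [Fintype ι] [Fintype κ] (A : Matrix κ ι R) (M : Matrix κ κ R) (v : ι → R) :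
    star v ⬝ᵥ (Aᴴ * M * A) *ᵥ v = star (A *ᵥ v) ⬝ᵥ M *ᵥ (A *ᵥ v) := by
  simp only [star_mulVec, dotProduct_mulVec, vecMul_vecMul, Matrix.mul_assoc]

lemma Matrix.re_star_dotProduct_add_smul_one_mulVec {ι : Type*} [Fintype ι] [DecidableEq ι]
    (M : Matrix ι ι ℂ) (t : ℝ) (v : ι → ℂ) :
    (star v ⬝ᵥ (M + (t : ℂ) • 1) *ᵥ v).re = (star v ⬝ᵥ M *ᵥ v).re + t * (star v ⬝ᵥ v).re := by
  simp [add_mulVec, smul_mulVec, dotProduct_add, Complex.mul_re]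

lemma AddSubgroup.exists_isCompact_forall_exists_sub_mem {E : Type*} [NormedAddCommGroup E]
    [NormedSpace ℝ E] [FiniteDimensional ℝ E] {Λ : AddSubgroup E}
    (hspan : Submodule.span ℝ (Λ : Set E) = ⊤) :
    ∃ K : Set E, IsCompact K ∧ ∀ z, ∃ l ∈ Λ, z - l ∈ K := by
  obtain ⟨s, hsΛ, hs_span, hs_li⟩ := exists_linearIndependent ℝ (Λ : Set E)
  have : Fintype s := hs_li.setFinite.fintype
  let b : Module.Basis s ℝ E := .mk hs_li (by rw [Subtype.range_coe, hs_span, hspan])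
  have hbΛ : Submodule.span ℤ (Set.range b) ≤ Λ.toIntSubmodule := by
    rw [Submodule.span_le, Module.Basis.coe_mk, Subtype.range_coe]
    exact hsΛ
  refine ⟨Metric.closedBall 0 (∑ i, ‖b i‖), isCompact_closedBall _ _,
    fun z => ⟨ZSpan.floor b z, hbΛ (ZSpan.floor b z).2, ?_⟩⟩
  simpa [← ZSpan.fract_apply] using ZSpan.norm_fract_le b z

section flatNorm

variable {ι κ : Type*} [Fintype ι] [Fintype κ]

noncomputable def flatNorm (Λ : AddSubgroup (ι → ℂ)) (M : Matrix ι ι ℂ) (z : ι → ℂ) : ℝ :=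
  ⨅ l : Λ, √((star (z - (l : ι → ℂ)) ⬝ᵥ M *ᵥ (z - (l : ι → ℂ))).re)

lemma flatDist_eq_flatNorm {k : ℕ} (Λ : AddSubgroup (Fin k → ℂ)) (M : Matrix (Fin k) (Fin k) ℂ)
    (x y : Fin k → ℂ) : flatDist Λ M x y = flatNorm Λ M (x - y) :=
  rfl

variable {Λ : AddSubgroup (ι → ℂ)}

lemma flatNorm_le (M : Matrix ι ι ℂ) (z : ι → ℂ) (l : Λ) :
    flatNorm Λ M z ≤ √((star (z - (l : ι → ℂ)) ⬝ᵥ M *ᵥ (z - (l : ι → ℂ))).re) :=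
  ciInf_le ⟨0, Set.forall_mem_range.2 fun _ => Real.sqrt_nonneg _⟩ l

lemma flatNorm_conjTranspose_mul_mul (Λ : AddSubgroup (ι → ℂ)) (A : Matrix κ ι ℂ)
    (M : Matrix κ κ ℂ) (z : ι → ℂ) :
    flatNorm Λ (Aᴴ * M * A) z = flatNorm (Λ.map A.mulVecLin.toAddMonoidHom) M (A *ᵥ z) := by
  rw [flatNorm, flatNorm,
    ← (A.mulVecLin.toAddMonoidHom.addSubgroupMap_surjective Λ).iInf_comp]
  refine iInf_congr fun l => ?_
  rw [star_dotProduct_conjTranspose_mul_mul_mulVec, mulVec_sub]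
  rfl

lemma flatNorm_one_eq_infDist [DecidableEq ι] (Λ : AddSubgroup (ι → ℂ)) (z : ι → ℂ) :
    flatNorm Λ 1 z = Metric.infDist (WithLp.toLp 2 z) (WithLp.toLp 2 '' (Λ : Set (ι → ℂ))) := by
  rw [flatNorm, Metric.infDist_eq_iInf,
    ← (Set.imageFactorization_surjective (f := WithLp.toLp 2) (s := (Λ : Set (ι → ℂ)))).iInf_comp]
  refine iInf_congr fun l => ?_
  rw [dist_eq_norm, @norm_eq_sqrt_re_inner ℂ, one_mulVec, dotProduct_comm]
  rfl

open scoped MatrixOrder in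
lemma continuous_flatNorm {M : Matrix ι ι ℂ} (hM : M.PosSemidef) : Continuous (flatNorm Λ M) := by
  classical
  obtain ⟨B, hB⟩ := CStarAlgebra.nonneg_iff_eq_star_mul_self.mp hM.nonneg
  have hM_eq : M = Bᴴ * 1 * B := by rw [hB, Matrix.mul_one]; rfl
  have hM_infDist : flatNorm Λ M = fun z => Metric.infDist (WithLp.toLp 2 (B *ᵥ z))
      (WithLp.toLp 2 '' (Λ.map B.mulVecLin.toAddMonoidHom : Set (ι → ℂ))) := funext fun z => by
    rw [hM_eq, flatNorm_conjTranspose_mul_mul, flatNorm_one_eq_infDist]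
  rw [hM_infDist]
  exact (Metric.continuous_infDist_pt _).comp
    ((PiLp.continuous_toLp 2 _).comp B.mulVecLin.continuous_of_finiteDimensional)

lemma flatNorm_sub_of_mem (M : Matrix ι ι ℂ) (z : ι → ℂ) {l : ι → ℂ} (hl : l ∈ Λ) :
    flatNorm Λ M (z - l) = flatNorm Λ M z := by
  rw [flatNorm, flatNorm]
  conv_rhs => rw [← (Equiv.addRight (⟨l, hl⟩ : Λ)).iInf_comp]
  refine iInf_congr fun l' => ?_
  rw [Equiv.coe_addRight, AddSubgroup.coe_add, sub_sub, add_comm (l' : ι → ℂ)]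

variable [DecidableEq ι]

lemma monotone_flatNorm_add_smul_one (Λ : AddSubgroup (ι → ℂ)) (M : Matrix ι ι ℂ) (z : ι → ℂ) :
    Monotone fun t : ℝ => flatNorm Λ (M + (t : ℂ) • 1) z := fun s t hst =>
  ciInf_mono ⟨0, Set.forall_mem_range.2 fun _ => Real.sqrt_nonneg _⟩ fun l => by
    simp only [re_star_dotProduct_add_smul_one_mulVec]
    gcongr
    exact (Complex.le_def.mp (dotProduct_star_self_nonneg _)).1

lemma flatNorm_le_flatNorm_add_smul_one (M : Matrix ι ι ℂ) (z : ι → ℂ) {t : ℝ} (ht : 0 ≤ t) :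
    flatNorm Λ M z ≤ flatNorm Λ (M + (t : ℂ) • 1) z := by
  simpa using monotone_flatNorm_add_smul_one Λ M z ht

lemma tendsto_flatNorm_add_smul_one (Λ : AddSubgroup (ι → ℂ)) (M : Matrix ι ι ℂ) (z : ι → ℂ) :
    Tendsto (fun t : ℝ => flatNorm Λ (M + (t : ℂ) • 1) z) (𝓝[>] 0) (𝓝 (flatNorm Λ M z)) := by
  refine tendsto_order.2 ⟨fun a ha => ?_, fun b hb => ?_⟩
  · filter_upwards [self_mem_nhdsWithin] with t ht
    exact ha.trans_le (flatNorm_le_flatNorm_add_smul_one M z (le_of_lt ht))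
  · obtain ⟨l, hl⟩ := exists_lt_of_ciInf_lt hb
    set v := z - (l : ι → ℂ)
    have hcont : Continuous fun t : ℝ =>
        √((star v ⬝ᵥ M *ᵥ v).re + t * (star v ⬝ᵥ v).re) := by fun_prop
    have hev := (hcont.tendsto 0).eventually_lt_const (by simpa using hl)
    filter_upwards [nhdsWithin_le_nhds hev] with t ht
    refine (flatNorm_le _ z l).trans_lt ?_
    rwa [re_star_dotProduct_add_smul_one_mulVec]

lemma tendstoUniformly_flatNorm_add_smul_one (hspan : Submodule.span ℝ (Λ : Set (ι → ℂ)) = ⊤)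
    {M : Matrix ι ι ℂ} (hM : M.PosSemidef) :
    TendstoUniformly (fun t : ℝ => flatNorm Λ (M + (t : ℂ) • 1)) (flatNorm Λ M) (𝓝[>] 0) := by
  obtain ⟨K, hK, hcov⟩ := AddSubgroup.exists_isCompact_forall_exists_sub_mem hspan
  -- Dini's theorem is stated along `atTop`; monotonicity in `t` lets a sequence `s k ↓ 0` suffice.
  let s : ℕ → ℝ := fun k => 1 / (k + 1)
  have hs_pos : ∀ k, 0 < s k := fun k => Nat.one_div_pos_of_nat
  have hs : Tendsto s atTop (𝓝[>] 0) :=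
    tendsto_nhdsWithin_iff.2 ⟨tendsto_one_div_add_atTop_nhds_zero_nat, .of_forall hs_pos⟩
  have hsK : TendstoUniformlyOn (fun k => flatNorm Λ (M + (s k : ℂ) • 1)) (flatNorm Λ M) atTop K :=
    Antitone.tendstoUniformlyOn_of_forall_tendsto hK
      (fun k => (continuous_flatNorm (hM.add (PosSemidef.one.smul
        (Complex.zero_le_real.2 (hs_pos k).le)))).continuousOn)
      (fun z _ => (monotone_flatNorm_add_smul_one Λ M z).comp_antitone
        fun _ _ h => Nat.one_div_le_one_div h)
      (continuous_flatNorm hM).continuousOn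
      (fun z _ => (tendsto_flatNorm_add_smul_one Λ M z).comp hs)
  rw [Metric.tendstoUniformly_iff]
  intro ε hε
  obtain ⟨k, hk⟩ := (Metric.tendstoUniformlyOn_iff.1 hsK ε hε).exists
  filter_upwards [Ioo_mem_nhdsGT (hs_pos k)] with t ht z
  obtain ⟨l, hl, hzl⟩ := hcov z
  rw [← flatNorm_sub_of_mem M z hl, ← flatNorm_sub_of_mem _ z hl]
  refine (Real.dist_left_le_of_mem_uIcc (Set.mem_uIcc_of_le ?_ ?_)).trans_lt (hk _ hzl)
  · exact flatNorm_le_flatNorm_add_smul_one M _ ht.1.le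
  · exact monotone_flatNorm_add_smul_one Λ M _ ht.2.le

end flatNorm

theorem flat_metrics_collapse_to_pullback_general
    (n m : ℕ) (Λ : AddSubgroup (Fin n → ℂ))
    (hspan : Submodule.span ℝ (Λ : Set (Fin n → ℂ)) = ⊤)
    (A : Matrix (Fin m) (Fin n) ℂ)
    (H' : Matrix (Fin m) (Fin m) ℂ) (hH' : H'.PosDef) :
    (∀ x y : Fin n → ℂ,
      flatDist Λ (Aᴴ * H' * A) x y
        = flatDist (Λ.map A.mulVecLin.toAddMonoidHom) H' (A *ᵥ x) (A *ᵥ y)) ∧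
    (∀ ε : ℝ, 0 < ε → ∃ t₀ : ℝ, 0 < t₀ ∧ ∀ t : ℝ, 0 < t → t < t₀ → ∀ x y : Fin n → ℂ,
      |flatDist Λ (Aᴴ * H' * A + (t : ℂ) • 1) x y - flatDist Λ (Aᴴ * H' * A) x y| < ε) := by
  refine ⟨fun x y => ?_, fun ε hε => ?_⟩
  · rw [flatDist_eq_flatNorm, flatDist_eq_flatNorm, flatNorm_conjTranspose_mul_mul, mulVec_sub]
  · have hH : (Aᴴ * H' * A).PosSemidef := hH'.posSemidef.conjTranspose_mul_mul_same A
    have hclose :=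
      Metric.tendstoUniformly_iff.1 (tendstoUniformly_flatNorm_add_smul_one hspan hH) ε hε
    obtain ⟨t₀, ht₀, hsub⟩ := mem_nhdsGT_iff_exists_Ioo_subset.1 hclose
    refine ⟨t₀, ht₀, fun t ht htt₀ x y => ?_⟩
    rw [abs_sub_comm, ← Real.dist_eq]
    exact hsub ⟨ht, htt₀⟩ (x - y)

/-- Let `Λ` be a full-rank lattice in `ℂⁿ`, `f : ℂⁿ → ℂᵐ` a surjective linear map (given by
the matrix `A`) such that `Λ' := f(Λ)` is a full-rank lattice in `ℂᵐ`, and `H'` a positive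
definite Hermitian `m×m` matrix; let `H := Aᴴ H' A` be the pullback of `H'` by `f` (so that
`x*Hx = (f x)*H'(f x)`). Then (1) the flat pseudodistance satisfies
`d_H(x̄,ȳ) = d_{H'}(f x, f y)`, and (2) as `t → 0⁺` the flat distances of the positive
definite matrices `H + t·I` converge uniformly to `d_H`. -/
theorem flat_metrics_collapse_to_pullback
    (n m : ℕ) (Λ : AddSubgroup (Fin n → ℂ)) [DiscreteTopology Λ]
    (hspan : Submodule.span ℝ (Λ : Set (Fin n → ℂ)) = ⊤)
    (A : Matrix (Fin m) (Fin n) ℂ) (hsurj : Function.Surjective A.mulVecLin)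
    [DiscreteTopology ↥(Λ.map A.mulVecLin.toAddMonoidHom)]
    (hspan' : Submodule.span ℝ
      ((Λ.map A.mulVecLin.toAddMonoidHom : AddSubgroup (Fin m → ℂ)) : Set (Fin m → ℂ)) = ⊤)
    (H' : Matrix (Fin m) (Fin m) ℂ) (hH' : H'.PosDef) :
    (∀ x y : Fin n → ℂ,
      flatDist Λ (Aᴴ * H' * A) x y
        = flatDist (Λ.map A.mulVecLin.toAddMonoidHom) H' (A *ᵥ x) (A *ᵥ y)) ∧
    (∀ ε : ℝ, 0 < ε → ∃ t₀ : ℝ, 0 < t₀ ∧ ∀ t : ℝ, 0 < t → t < t₀ → ∀ x y : Fin n → ℂ,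
      |flatDist Λ (Aᴴ * H' * A + (t : ℂ) • 1) x y - flatDist Λ (Aᴴ * H' * A) x y| < ε) :=
  flat_metrics_collapse_to_pullback_general n m Λ hspan A H' hH'
end
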